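/- arXiv:2002.10654 — 2 statements merged into one kernel-verified Lean document; each statement's English description precedes it below -/
import Mathlib

section
/- There is a universal constant C > 0 such that for every partial boolean function f : {0,1}^n → {0,1,*} and every balanced input distribution D = ½D0 + ½D1 for f: corr_{1/3}(f,D) ≤ C · sel_{1/3}(f,D). -/
open Finset

/-- A deterministic decision tree over alphabet `α`, querying positions `ι`,
with output labels `β`.  A `node i ch` queries position `i` and has one child per symbol. -/
inductive DTree (α ι β : Type) : Type where
  | leaf : β → DTree α ι β
  | node : ι → (α → DTree α ι β) → DTree α ι β

namespace DTree

/-- The output of the tree on input `x`. -/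
def eval {α ι β : Type} : DTree α ι β → (ι → α) → β
  | .leaf b, _ => b
  | .node i ch, x => (ch (x i)).eval x

/-- The depth of a tree: the maximum number of queries along any root-to-leaf path. -/
def depth {α ι β : Type} [Fintype α] : DTree α ι β → ℕ
  | .leaf _ => 0
  | .node _ ch => 1 + Finset.univ.sup fun a => (ch a).depth

/-- `Input(ℓ)` for the leaf `ℓ` reached by `x`: the set of inputs that follow
the same root-to-leaf path as `x`. -/
def reach {α ι β : Type} : DTree α ι β → (ι → α) → Set (ι → α)
  | .leaf _, _ => Set.univ
  | .node i ch, x => {y | y i = x i} ∩ (ch (x i)).reach x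

/-- For a tree on `k` samples, the set `ℓ_j ⊆ Σ^n` of strings consistent with the
queries made to the `j`-th sample on the path followed by input `x`. -/
def reachJ {α β : Type} {k n : ℕ} :
    DTree α (Fin k × Fin n) β → ((Fin k × Fin n) → α) → Fin k → Set (Fin n → α)
  | .leaf _, _, _ => Set.univ
  | .node p ch, x, j =>
      (if p.1 = j then {y : Fin n → α | y p.2 = x p} else Set.univ) ∩ (ch (x p)).reachJ x j

end DTree

/-- Probability mass of a set `S` under (the mass function of) a distribution `D`. -/
noncomputable def prS {γ : Type} [Fintype γ] (D : γ → ℝ) (S : Set γ) : ℝ :=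
  ∑ x, S.indicator D x

/-- `D` is a probability mass function on the finite type `γ`. -/
def IsDist {γ : Type} [Fintype γ] (D : γ → ℝ) : Prop :=
  (∀ x, 0 ≤ D x) ∧ ∑ x, D x = 1

/-- Likelihood ratio `LR(S) = D1(S)/D0(S)`. -/
noncomputable def LR {γ : Type} [Fintype γ] (D0 D1 : γ → ℝ) (S : Set γ) : ℝ :=
  prS D1 S / prS D0 S

/-- The `k`-fold product distribution `D^k` on `k` samples (input flattened). -/
noncomputable def prodD {α : Type} {n k : ℕ} (D : (Fin n → α) → ℝ) :
    ((Fin k × Fin n) → α) → ℝ :=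
  fun x => ∏ j, D fun i => x (j, i)

/-- `T` is a `(δ, M)`-likelihood booster for `D0, D1`. -/
def LBooster {α β : Type} [Fintype α] {n : ℕ}
    (D0 D1 : (Fin n → α) → ℝ) (δ M : ℝ) (T : DTree α (Fin n) β) : Prop :=
  1 - δ ≤ prS D1 {x | M ≤ LR D0 D1 (T.reach x)}

/-- `T` is a `(δ, M)`-overall likelihood booster for `D0^k, D1^k`. -/
def OBooster {α β : Type} [Fintype α] {n k : ℕ}
    (D0 D1 : (Fin n → α) → ℝ) (δ M : ℝ) (T : DTree α (Fin k × Fin n) β) : Prop :=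
  1 - δ ≤ prS (prodD D1) {x | M ≤ ∏ j, LR D0 D1 (T.reachJ x j)}

open scoped Classical in
/-- `T` is a `(δ, ε, M)`-uniform likelihood booster for `D0^k, D1^k`. -/
def UBooster {α β : Type} [Fintype α] {n k : ℕ}
    (D0 D1 : (Fin n → α) → ℝ) (δ ε M : ℝ) (T : DTree α (Fin k × Fin n) β) : Prop :=
  1 - δ ≤ prS (prodD D1)
    {x | (1 - ε) * k ≤ ((Finset.univ.filter fun j => M ≤ LR D0 D1 (T.reachJ x j)).card : ℝ)}

/-- `D = ½D0 + ½D1` is a balanced input distribution for the partial function `f`: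
`D_b` is a distribution supported on `f⁻¹(b)`. -/
def BalancedDist {n : ℕ} (f : (Fin n → Bool) → Option Bool) (D0 D1 : (Fin n → Bool) → ℝ) : Prop :=
  IsDist D0 ∧ IsDist D1 ∧ (∀ x, D0 x ≠ 0 → f x = some false) ∧ ∀ x, D1 x ≠ 0 → f x = some true

/-- `corr_ε(f, D)`: the minimum over `k ≥ 1` of the least depth of a deterministic decision
tree on `k` samples which, for a uniformly random `b`, on input drawn from `D_b^k`
outputs `b` with probability at least `1 - ε`. -/
noncomputable def corrC {n : ℕ} (ε : ℝ) (D0 D1 : (Fin n → Bool) → ℝ) : ℕ :=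
  sInf {q | ∃ k, 0 < k ∧ ∃ T : DTree Bool (Fin k × Fin n) Bool, T.depth ≤ q ∧
    1 - ε ≤ (prS (prodD D0) {x | T.eval x = false} + prS (prodD D1) {x | T.eval x = true}) / 2}

/-- `sel_ε(f, D)`: the minimum over `k ≥ 1` of the least depth of a deterministic decision
tree on `k` samples from `D` outputting a pair `(i, f(xⁱ))` with probability at least `1 - ε`. -/
noncomputable def selC {n : ℕ} (ε : ℝ) (f : (Fin n → Bool) → Option Bool)
    (D : (Fin n → Bool) → ℝ) : ℕ :=
  sInf {q | ∃ k, 0 < k ∧ ∃ T : DTree Bool (Fin k × Fin n) (Fin k × Bool), T.depth ≤ q ∧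
    1 - ε ≤ prS (prodD D) {x | f (fun i => x ((T.eval x).1, i)) = some (T.eval x).2}}

/-- The product distribution `D_{ab}^k = (Da × Db)^k` on `k` pairs of samples. -/
noncomputable def prodD2 {n k : ℕ} (Da Db : (Fin n → Bool) → ℝ) :
    ((Fin k × Fin 2 × Fin n) → Bool) → ℝ :=
  fun x => ∏ j, (Da fun i => x (j, 0, i)) * Db fun i => x (j, 1, i)

/-- `bicorr_ε(f, D)`: minimum over `k ≥ 1` of the least depth of a deterministic decision tree
that distinguishes `D_{01}^k` (output `false`) from `D_{10}^k` (output `true`) with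
probability at least `1 - ε` for a uniformly random choice between the two. -/
noncomputable def bicorrC {n : ℕ} (ε : ℝ) (D0 D1 : (Fin n → Bool) → ℝ) : ℕ :=
  sInf {q | ∃ k, 0 < k ∧ ∃ T : DTree Bool (Fin k × Fin 2 × Fin n) Bool, T.depth ≤ q ∧
    1 - ε ≤ (prS (prodD2 D0 D1) {x | T.eval x = false} +
             prS (prodD2 D1 D0) {x | T.eval x = true}) / 2}

/-- `R_ε(f)`: randomized query complexity, i.e. the least `q` such that some probability
distribution over deterministic decision trees of depth at most `q` outputs `f x`
with probability at least `1 - ε` for every `x` in the domain of `f`. -/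
noncomputable def Rq {ι : Type} (ε : ℝ) (f : (ι → Bool) → Option Bool) : ℕ :=
  sInf {q | ∃ (p : ℕ → ℝ) (Ts : ℕ → DTree Bool ι Bool),
    (∀ i, 0 ≤ p i) ∧ (∑' i, p i) = 1 ∧ (∀ i, (Ts i).depth ≤ q) ∧
    ∀ x b, f x = some b → 1 - ε ≤ ∑' i, if (Ts i).eval x = b then p i else 0}

/-- `corr_ε(f)`: the maximum of `corr_ε(f, D)` over balanced input distributions `D` for `f`. -/
noncomputable def corrMax {n : ℕ} (ε : ℝ) (f : (Fin n → Bool) → Option Bool) : ℕ :=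
  sSup {q | ∃ D0 D1, BalancedDist f D0 D1 ∧ q = corrC ε D0 D1}

/-- `sel_ε(f)`: the maximum of `sel_ε(f, D)` over balanced input distributions `D` for `f`. -/
noncomputable def selMax {n : ℕ} (ε : ℝ) (f : (Fin n → Bool) → Option Bool) : ℕ :=
  sSup {q | ∃ D0 D1, BalancedDist f D0 D1 ∧ q = selC ε f fun x => (D0 x + D1 x) / 2}
/-- The parity (XOR) of all bits of `x`. -/
def XORn {n : ℕ} (x : Fin n → Bool) : Bool :=
  decide ((Finset.univ.filter fun i => x i = true).card % 2 = 1)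

/-- The parity of the bits of `x` in positions `≥ 2`. -/
def XORtail {n : ℕ} (x : Fin n → Bool) : Bool :=
  decide ((Finset.univ.filter fun i : Fin n => 2 ≤ (i : ℕ) ∧ x i = true).card % 2 = 1)

/-- `x` with the bits in block `B` flipped. -/
def flipB {n : ℕ} (x : Fin n → Bool) (B : Finset (Fin n)) : Fin n → Bool :=
  fun i => if i ∈ B then !(x i) else x i

/-- `B` is a sensitive block of `f` on `x`: `x^B` lies in the domain of `f` and
`f(x^B) ≠ f(x)`. -/
def SensBlock {n : ℕ} (f : (Fin n → Bool) → Option Bool) (x : Fin n → Bool)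
    (B : Finset (Fin n)) : Prop :=
  (f (flipB x B)).isSome ∧ f (flipB x B) ≠ f x

/-- Fractional block sensitivity `fbs(f) = max_x fbs(f, x)`, where `fbs(f,x)` is the value
of the fractional packing LP over the sensitive blocks of `x`. -/
noncomputable def fbs {n : ℕ} (f : (Fin n → Bool) → Option Bool) : ℝ :=
  sSup {r | ∃ x, (f x).isSome ∧ ∃ w : Finset (Fin n) → ℝ,
    (∀ B, 0 ≤ w B) ∧ (∀ B, w B ≤ 1) ∧
    (∀ B, w B ≠ 0 → SensBlock f x B) ∧
    (∀ i, ∑ B ∈ Finset.univ.filter (fun B => i ∈ B), w B ≤ 1) ∧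
    r = ∑ B, w B}

/-- The composed partial function `f ∘ g`, defined on `(x¹, …, xⁿ)` when every `xⁱ` is in
the domain of `g`, with value `f(g(x¹), …, g(xⁿ))`. -/
def compFG {n m : ℕ} (f : (Fin n → Bool) → Option Bool) (g : (Fin m → Bool) → Option Bool) :
    ((Fin n × Fin m) → Bool) → Option Bool :=
  fun x =>
    if h : ∀ i, (g fun s => x (i, s)).isSome then
      f fun i => (g fun s => x (i, s)).get (h i)
    else none

/-- Number of queries that `T` makes into block `B` on input `x` (each query reads one bit
`(i, s)`, and counts if `i ∈ B`). -/
def countQ {m n : ℕ} {β : Type} (B : Finset (Fin n)) :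
    DTree Bool (Fin n × Fin m) β → ((Fin n × Fin m) → Bool) → ℕ
  | .leaf _, _ => 0
  | .node p ch, x => (if p.1 ∈ B then 1 else 0) + countQ B (ch (x p)) x

/-- The Shaltiel distribution for `XOR_n`, `n = m + 2`: with probability 99/100 output `0`
followed by `n-1` uniform bits; with probability 1/100 output `1`, one uniform bit, `0^{n-2}`. -/
noncomputable def D16 (m : ℕ) : (Fin (m + 2) → Bool) → ℝ := fun x =>
  (if x 0 = false then (99 / 100) * ((1:ℝ) / 2) ^ (m + 1) else 0) +
  (if x 0 = true ∧ (∀ i : Fin (m + 2), 2 ≤ (i : ℕ) → x i = false) then 1 / 200 else 0)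

/-- The distribution of Theorem 2 for `XOR_n`, `n = m + 3`: sample `z` uniform on `n-2` bits,
`a := XOR(z)`, `b` uniform; output `a a z` w.p. 1/100 and `b b z` w.p. 99/100. -/
noncomputable def D34 (m : ℕ) : (Fin (m + 3) → Bool) → ℝ := fun x =>
  if x 0 = x 1 then
    ((1:ℝ) / 2) ^ (m + 1) * (99 / 200 + if x 0 = XORtail x then 1 / 100 else 0)
  else 0

/-- A distribution conditioned on `XORn x = b` (for distributions giving each value
probability 1/2). -/
noncomputable def condXOR {n : ℕ} (D : (Fin n → Bool) → ℝ) (b : Bool) : (Fin n → Bool) → ℝ :=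
  fun x => if XORn x = b then 2 * D x else 0


/-!
Let `T` be a selection tree of depth `q` on `k` samples of `D = ½D0 + ½D1` that succeeds with
probability `2/3`. Run on `D0^k` and on `D1^k`, it reaches its leaves with two distributions
whose Bhattacharyya coefficient is at most `17/18`: at a leaf answering `(j, c)`, AM-GM trades
the overlap of `D0` and `D1` on the `j`-th sample against the mass on which the answer is
correct. Running `T` on `8` disjoint blocks of fresh samples multiplies the coefficients, giving
`(17/18)^8 < 2/3`, and answering at each leaf with the likelier of `D0^{8k}` and `D1^{8k}` errs
with probability at most half the coefficient. Hence `corr ≤ 8 q`.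
-/

theorem Real.sqrt_mul_le_mul_add_div {u v t : ℝ} (hu : 0 ≤ u) (hv : 0 ≤ v) (ht : 0 < t) :
    √(u * v) ≤ t * u + v / (4 * t) := by
  rw [Real.sqrt_le_iff]
  refine ⟨by positivity, ?_⟩
  have hsq : (t * u + v / (4 * t)) ^ 2 - u * v = (t * u - v / (4 * t)) ^ 2 := by
    field_simp
    ring
  nlinarith [sq_nonneg (t * u - v / (4 * t))]

theorem Real.min_le_sqrt_mul {a b : ℝ} (ha : 0 ≤ a) (hb : 0 ≤ b) : min a b ≤ √(a * b) :=
  Real.le_sqrt_of_sq_le <| by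
    rcases le_total a b with h | h
    · rw [min_eq_left h, sq]; exact mul_le_mul_of_nonneg_left h ha
    · rw [min_eq_right h, sq]; exact mul_le_mul_of_nonneg_right h hb

section Masses

variable {γ : Type} [Fintype γ]

theorem prS_nonneg {D : γ → ℝ} (hD : ∀ x, 0 ≤ D x) (S : Set γ) : 0 ≤ prS D S :=
  Finset.sum_nonneg fun x _ => Set.indicator_nonneg (fun y _ => hD y) x

theorem prS_setOf_eq_sum (D : γ → ℝ) (P : γ → Prop) [DecidablePred P] :
    prS D {x | P x} = ∑ x, D x * if P x then 1 else 0 :=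
  Finset.sum_congr rfl fun x _ => by by_cases h : P x <;> simp [Set.indicator, h]

theorem prS_add_div_two (D0 D1 : γ → ℝ) (S : Set γ) :
    prS (fun y => (D0 y + D1 y) / 2) S = (prS D0 S + prS D1 S) / 2 := by
  simp only [prS, ← Finset.sum_add_distrib, Finset.sum_div]
  exact Finset.sum_congr rfl fun y _ => by by_cases hy : y ∈ S <;> simp [hy]

theorem sum_add_div_two_eq_one {D0 D1 : γ → ℝ} (h0 : ∑ y, D0 y = 1) (h1 : ∑ y, D1 y = 1) :
    ∑ y, (D0 y + D1 y) / 2 = 1 := by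
  rw [← Finset.sum_div, Finset.sum_add_distrib, h0, h1]
  norm_num

end Masses

namespace DTree

section Combinators

variable {α ι ι' β γ : Type}

def graft : DTree α ι β → DTree α ι γ → DTree α ι γ
  | .leaf _, U => U
  | .node i ch, U => .node i fun a => (ch a).graft U

def reindex (g : ι → ι') : DTree α ι β → DTree α ι' β
  | .leaf b => .leaf b
  | .node i ch => .node (g i) fun a => (ch a).reindex g

def QueriesIn (s : Set ι) : DTree α ι β → Prop
  | .leaf _ => True
  | .node i ch => i ∈ s ∧ ∀ a, (ch a).QueriesIn s

theorem queriesIn_reindex (g : ι → ι') (T : DTree α ι β) :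
    (T.reindex g).QueriesIn (Set.range g) := by
  induction T with
  | leaf b => trivial
  | node i ch ih => exact ⟨Set.mem_range_self i, ih⟩

variable [Fintype α]

theorem depth_node (i : ι) (ch : α → DTree α ι β) :
    (node i ch).depth = 1 + univ.sup fun a => (ch a).depth :=
  rfl

theorem depth_reindex (g : ι → ι') (T : DTree α ι β) : (T.reindex g).depth = T.depth := by
  induction T with
  | leaf b => rfl
  | node i ch ih => simp only [reindex, depth_node, ih]

theorem depth_graft (T : DTree α ι β) (U : DTree α ι γ) :
    (T.graft U).depth ≤ T.depth + U.depth := by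
  induction T with
  | leaf b => simp [graft, depth]
  | node i ch ih =>
    have : (univ.sup fun a => ((ch a).graft U).depth)
        ≤ (univ.sup fun a => (ch a).depth) + U.depth :=
      Finset.sup_le fun a _ => (ih a).trans <| Nat.add_le_add_right
        (le_sup (f := fun a => (ch a).depth) (mem_univ a)) _
    simp only [graft, depth_node]
    omega

end Combinators

section QueryAll

variable {α ι β : Type} [DecidableEq ι]

def queryList (g : (ι → α) → β) : List ι → (ι → α) → DTree α ι β
  | [], acc => .leaf (g acc)
  | i :: l, acc => .node i fun a => queryList g l (Function.update acc i a)

theorem eval_queryList (g : (ι → α) → β) (l : List ι) (acc x : ι → α) :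
    (queryList g l acc).eval x = g fun i => if i ∈ l then x i else acc i := by
  induction l generalizing acc with
  | nil => simp [queryList, eval]
  | cons j l ih =>
    simp only [queryList, eval, ih]
    congr 1
    funext i
    by_cases hi : i ∈ l
    · simp [hi]
    · by_cases hij : i = j
      · subst hij; simp [hi]
      · simp [hi, hij]

theorem depth_queryList [Fintype α] (g : (ι → α) → β) (l : List ι) (acc : ι → α) :
    (queryList g l acc).depth ≤ l.length := by
  induction l generalizing acc with
  | nil => simp [queryList, depth]
  | cons j l ih =>
    have := Finset.sup_le (s := univ) fun a _ => ih (Function.update acc j a)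
    simp only [queryList, depth_node, List.length_cons]
    omega

theorem exists_depth_le_card_eval_eq [Fintype α] [Nonempty α] [Fintype ι] (g : (ι → α) → β) :
    ∃ T : DTree α ι β, T.depth ≤ Fintype.card ι ∧ ∀ x, T.eval x = g x := by
  refine ⟨queryList g univ.toList fun _ => Classical.arbitrary α, ?_, fun x => ?_⟩
  · simpa using depth_queryList g univ.toList _
  · simp [eval_queryList]

end QueryAll

section LeafSum

variable {α ι κ β : Type} [DecidableEq κ]

def restrictAt (C : κ → Set (ι → α)) (p : κ × ι) (a : α) : κ → Set (ι → α) :=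
  Function.update C p.1 (C p.1 ∩ {y | y p.2 = a})

theorem restrictAt_comp {κ' : Type} [DecidableEq κ'] {e : κ' → κ} (he : Function.Injective e)
    (C : κ → Set (ι → α)) (p : κ' × ι) (a : α) :
    restrictAt C (Prod.map e id p) a ∘ e = restrictAt (C ∘ e) p a :=
  Function.update_comp_eq_of_injective C he _ _

variable [Fintype α]

/-- `T.leafSum Φ C = ∑ Φ (C ∩ Input(ℓ)) (label ℓ)` over the leaves `ℓ` of `T`, where a cylinder
`C` holds one set of strings per sample. -/
def leafSum (Φ : (κ → Set (ι → α)) → β → ℝ) :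
    DTree α (κ × ι) β → (κ → Set (ι → α)) → ℝ
  | .leaf b, C => Φ C b
  | .node p ch, C => ∑ a, (ch a).leafSum Φ (restrictAt C p a)

variable {Φ Ψ : (κ → Set (ι → α)) → β → ℝ}

theorem leafSum_add (T : DTree α (κ × ι) β) (C : κ → Set (ι → α)) :
    T.leafSum (fun C' b => Φ C' b + Ψ C' b) C = T.leafSum Φ C + T.leafSum Ψ C := by
  induction T generalizing C with
  | leaf b => rfl
  | node p ch ih => simp only [leafSum, ih, Finset.sum_add_distrib]

theorem leafSum_sub (T : DTree α (κ × ι) β) (C : κ → Set (ι → α)) :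
    T.leafSum (fun C' b => Φ C' b - Ψ C' b) C = T.leafSum Φ C - T.leafSum Ψ C := by
  induction T generalizing C with
  | leaf b => rfl
  | node p ch ih => simp only [leafSum, ih, Finset.sum_sub_distrib]

theorem leafSum_const_mul (r : ℝ) (T : DTree α (κ × ι) β) (C : κ → Set (ι → α)) :
    T.leafSum (fun C' b => r * Φ C' b) C = r * T.leafSum Φ C := by
  induction T generalizing C with
  | leaf b => rfl
  | node p ch ih => simp only [leafSum, ih, Finset.mul_sum]

theorem leafSum_mono (h : ∀ C b, Φ C b ≤ Ψ C b) (T : DTree α (κ × ι) β)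
    (C : κ → Set (ι → α)) : T.leafSum Φ C ≤ T.leafSum Ψ C := by
  induction T generalizing C with
  | leaf b => exact h C b
  | node p ch ih => exact Finset.sum_le_sum fun a _ => ih a _

theorem leafSum_le_leafSum_of_invariant {s : Set (κ × ι)} (Q : (κ → Set (ι → α)) → Prop)
    (hQ : ∀ C p a, p ∈ s → Q C → Q (restrictAt C p a)) (h : ∀ C b, Q C → Φ C b ≤ Ψ C b)
    {T : DTree α (κ × ι) β} (hT : T.QueriesIn s) {C : κ → Set (ι → α)} (hC : Q C) :
    T.leafSum Φ C ≤ T.leafSum Ψ C := by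
  induction T generalizing C with
  | leaf b => exact h C b hC
  | node p ch ih => exact Finset.sum_le_sum fun a _ => ih a (hT.2 a) (hQ C p a hT.1 hC)

theorem leafSum_mul_of_invariant {s : Set (κ × ι)} (H : (κ → Set (ι → α)) → ℝ)
    (hH : ∀ C p a, p ∈ s → H (restrictAt C p a) = H C)
    {T : DTree α (κ × ι) β} (hT : T.QueriesIn s) (C : κ → Set (ι → α)) :
    T.leafSum (fun C' b => H C' * Φ C' b) C = H C * T.leafSum Φ C := by
  induction T generalizing C with
  | leaf b => rfl
  | node p ch ih => simp only [leafSum, Finset.mul_sum, ih _ (hT.2 _), hH C p _ hT.1]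

theorem leafSum_graft {γ : Type} (T : DTree α (κ × ι) γ) (U : DTree α (κ × ι) β)
    (C : κ → Set (ι → α)) :
    (T.graft U).leafSum Φ C = T.leafSum (fun C' _ => U.leafSum Φ C') C := by
  induction T generalizing C with
  | leaf b => rfl
  | node p ch ih => simp only [graft, leafSum, ih]

theorem leafSum_reindex {κ' : Type} [DecidableEq κ'] {e : κ' → κ}
    (he : Function.Injective e) (Φ : (κ' → Set (ι → α)) → β → ℝ)
    (T : DTree α (κ' × ι) β) (C : κ → Set (ι → α)) :
    (T.reindex (Prod.map e id)).leafSum (fun C' b => Φ (C' ∘ e) b) C = T.leafSum Φ (C ∘ e) := by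
  induction T generalizing C with
  | leaf b => rfl
  | node p ch ih => simp only [reindex, leafSum, ih, restrictAt_comp he]

def relabel {γ : Type} (g : (κ → Set (ι → α)) → β → γ) :
    DTree α (κ × ι) β → (κ → Set (ι → α)) → DTree α (κ × ι) γ
  | .leaf b, C => .leaf (g C b)
  | .node p ch, C => .node p fun a => (ch a).relabel g (restrictAt C p a)

theorem depth_relabel {γ : Type} (g : (κ → Set (ι → α)) → β → γ) (T : DTree α (κ × ι) β)
    (C : κ → Set (ι → α)) : (T.relabel g C).depth = T.depth := by
  induction T generalizing C with
  | leaf b => rfl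
  | node p ch ih => simp only [relabel, depth_node, ih]

theorem leafSum_relabel {γ : Type} (g : (κ → Set (ι → α)) → β → γ)
    (Φ : (κ → Set (ι → α)) → γ → ℝ) (T : DTree α (κ × ι) β) (C : κ → Set (ι → α)) :
    (T.relabel g C).leafSum Φ C = T.leafSum (fun C' b => Φ C' (g C' b)) C := by
  induction T generalizing C with
  | leaf b => rfl
  | node p ch ih => simp only [relabel, leafSum, ih]

end LeafSum

end DTree

section Cylinder

open DTree

variable {α ι κ β : Type} [Fintype κ] [DecidableEq κ] (D : (ι → α) → ℝ)

noncomputable def cylWeight (C : κ → Set (ι → α)) (x : κ × ι → α) : ℝ :=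
  ∏ j, (C j).indicator D fun i => x (j, i)

theorem cylWeight_update_inter (C : κ → Set (ι → α)) (j₀ : κ) (P : (ι → α) → Prop)
    [DecidablePred P] (x : κ × ι → α) :
    cylWeight D (Function.update C j₀ (C j₀ ∩ {y | P y})) x
      = cylWeight D C x * if P (fun i => x (j₀, i)) then 1 else 0 := by
  have hj₀ (z : ι → α) :
      (C j₀ ∩ {y | P y}).indicator D z = (C j₀).indicator D z * if P z then 1 else 0 := by
    by_cases hz : z ∈ C j₀ <;> by_cases hP : P z <;> simp [Set.indicator, hz, hP]
  simp only [cylWeight, Fintype.prod_eq_mul_prod_compl j₀, Function.update_self, hj₀]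
  rw [Finset.prod_congr rfl fun j hj => by
    rw [Function.update_of_ne (Finset.mem_compl.mp hj ∘ Finset.mem_singleton.mpr)]]
  ring

theorem cylWeight_restrictAt [DecidableEq α] (C : κ → Set (ι → α)) (p : κ × ι) (a : α)
    (x : κ × ι → α) :
    cylWeight D (restrictAt C p a) x = cylWeight D C x * if x p = a then 1 else 0 :=
  cylWeight_update_inter D C p.1 (fun y => y p.2 = a) x

variable [Fintype α] [Fintype ι] [DecidableEq ι]

noncomputable def cylMass (C : κ → Set (ι → α)) : ℝ :=
  ∏ j, prS D (C j)

theorem sum_prod_sections (G : κ → (ι → α) → ℝ) :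
    ∑ x : κ × ι → α, ∏ j, G j (fun i => x (j, i)) = ∏ j, ∑ y, G j y := by
  rw [Finset.prod_univ_sum, Fintype.piFinset_univ]
  exact Fintype.sum_equiv (Equiv.curry κ ι α) _ _ fun _ => rfl

theorem sum_cylWeight (C : κ → Set (ι → α)) : ∑ x, cylWeight D C x = cylMass D C :=
  sum_prod_sections _

theorem sum_cylWeight_mul_ite (C : κ → Set (ι → α)) (j₀ : κ) (P : (ι → α) → Prop)
    [DecidablePred P] :
    ∑ x, cylWeight D C x * (if P (fun i => x (j₀, i)) then 1 else 0)
      = cylMass D (Function.update C j₀ (C j₀ ∩ {y | P y})) := by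
  simp only [← cylWeight_update_inter, sum_cylWeight]

/-- The law of total probability over the leaves of `T`. -/
theorem sum_cylWeight_mul_eval [DecidableEq α] (g : β → (κ × ι → α) → ℝ)
    (T : DTree α (κ × ι) β) (C : κ → Set (ι → α)) :
    ∑ x, cylWeight D C x * g (T.eval x) x
      = T.leafSum (fun C' b => ∑ x, cylWeight D C' x * g b x) C := by
  induction T generalizing C with
  | leaf b => rfl
  | node p ch ih =>
    simp only [leafSum, ← ih, cylWeight_restrictAt, mul_assoc, ite_mul, one_mul, zero_mul,
      mul_ite, mul_zero]
    rw [Finset.sum_comm]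
    exact Finset.sum_congr rfl fun x _ => by simp [eval]

theorem leafSum_cylMass [DecidableEq α] (T : DTree α (κ × ι) β) (C : κ → Set (ι → α)) :
    T.leafSum (fun C' _ => cylMass D C') C = cylMass D C := by
  simpa [sum_cylWeight] using (sum_cylWeight_mul_eval D (fun _ _ => 1) T C).symm

end Cylinder

section Bhattacharyya

open DTree

variable {α ι κ β : Type} [Fintype α] [Fintype ι] [DecidableEq ι] [Fintype κ]
  {D0 D1 : (ι → α) → ℝ}

theorem cylMass_nonneg {D : (ι → α) → ℝ} (hD : ∀ y, 0 ≤ D y) (C : κ → Set (ι → α)) :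
    0 ≤ cylMass D C :=
  Finset.prod_nonneg fun j _ => prS_nonneg hD (C j)

theorem cylMass_const_univ {D : (ι → α) → ℝ} (hD : ∑ y, D y = 1) :
    cylMass D (fun _ : κ => Set.univ) = 1 := by
  simp [cylMass, prS, hD]

noncomputable def cylBhattacharyya (D0 D1 : (ι → α) → ℝ) (C : κ → Set (ι → α)) : ℝ :=
  ∏ j, √(prS D0 (C j) * prS D1 (C j))

theorem cylBhattacharyya_nonneg (C : κ → Set (ι → α)) : 0 ≤ cylBhattacharyya D0 D1 C :=
  Finset.prod_nonneg fun _ _ => Real.sqrt_nonneg _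

theorem cylBhattacharyya_const_univ (h0 : ∑ y, D0 y = 1) (h1 : ∑ y, D1 y = 1) :
    cylBhattacharyya D0 D1 (fun _ : κ => Set.univ) = 1 := by
  simp [cylBhattacharyya, prS, h0, h1]

theorem cylBhattacharyya_eq_sqrt (h0 : ∀ y, 0 ≤ D0 y) (h1 : ∀ y, 0 ≤ D1 y)
    (C : κ → Set (ι → α)) :
    cylBhattacharyya D0 D1 C = √(cylMass D0 C * cylMass D1 C) := by
  rw [cylBhattacharyya, cylMass, cylMass, ← Finset.prod_mul_distrib,
    Real.sqrt_prod _ fun j _ => mul_nonneg (prS_nonneg h0 _) (prS_nonneg h1 _)]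

variable [DecidableEq κ]

/-- The Bhattacharyya coefficient `∑_ℓ √(D0^κ(ℓ) D1^κ(ℓ))` of the distributions of the leaf `ℓ`
reached by `T` on inputs from `D0^κ` and `D1^κ`, both restricted to the cylinder `C`. -/
noncomputable def DTree.bhattacharyya (D0 D1 : (ι → α) → ℝ) (T : DTree α (κ × ι) β)
    (C : κ → Set (ι → α)) : ℝ :=
  T.leafSum (fun C' _ => cylBhattacharyya D0 D1 C') C

theorem DTree.bhattacharyya_reindex (h0 : ∑ y, D0 y = 1) (h1 : ∑ y, D1 y = 1)
    {κ' : Type} [Fintype κ'] [DecidableEq κ'] {e : κ' → κ} (he : Function.Injective e)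
    (T : DTree α (κ' × ι) β) {C : κ → Set (ι → α)} (hC : ∀ j, C (e j) = Set.univ) :
    (T.reindex (Prod.map e id)).bhattacharyya D0 D1 C
      = T.bhattacharyya D0 D1 (fun _ => Set.univ) * cylBhattacharyya D0 D1 C := by
  set s := (univ.map ⟨e, he⟩)ᶜ
  set H : (κ → Set (ι → α)) → ℝ := fun C' => ∏ j ∈ s, √(prS D0 (C' j) * prS D1 (C' j))
  have hsplit (C' : κ → Set (ι → α)) :
      cylBhattacharyya D0 D1 C' = H C' * cylBhattacharyya D0 D1 (C' ∘ e) := by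
    rw [cylBhattacharyya, ← Finset.prod_mul_prod_compl (univ.map ⟨e, he⟩), Finset.prod_map,
      mul_comm]
    rfl
  have hH : ∀ C' p a, p ∈ Set.range (Prod.map e id) → H (restrictAt C' p a) = H C' := by
    rintro C' _ a ⟨⟨j, i⟩, rfl⟩
    refine Finset.prod_congr rfl fun j' hj' => ?_
    rw [restrictAt, Function.update_of_ne]
    rintro rfl
    simp [s] at hj'
  have hCe : C ∘ e = fun _ => Set.univ := funext hC
  simp only [DTree.bhattacharyya, hsplit, leafSum_mul_of_invariant H hH (queriesIn_reindex _ T)]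
  rw [leafSum_reindex he (fun C' _ => cylBhattacharyya D0 D1 C'), hCe,
    cylBhattacharyya_const_univ h0 h1]
  ring

end Bhattacharyya

section Selection

open DTree

variable {α ι κ : Type} [Fintype α] [Fintype ι] [DecidableEq ι] {f : (ι → α) → Option Bool}
  {D0 D1 : (ι → α) → ℝ}

theorem prS_add_div_two_inter (hf0 : ∀ y, D0 y ≠ 0 → f y = some false)
    (hf1 : ∀ y, D1 y ≠ 0 → f y = some true) (c : Bool) (S : Set (ι → α)) :
    prS (fun y => (D0 y + D1 y) / 2) (S ∩ {y | f y = some c})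
      = prS (if c then D1 else D0) S / 2 := by
  simp only [prS, Finset.sum_div]
  refine Finset.sum_congr rfl fun y _ => ?_
  by_cases hy : y ∈ S
  · rcases (em (D0 y = 0)).imp_right (hf0 y) with h0 | h0 <;>
      rcases (em (D1 y = 0)).imp_right (hf1 y) with h1 | h1 <;>
      cases c <;> simp_all [Set.indicator]
  · simp [hy]

variable [Fintype κ] [DecidableEq κ]

/-- AM-GM `√(uv) ≤ u/3 + 3v/4`, with `u`, `v` the masses of `C j` under `D_c`, `D_{¬c}`. -/
theorem cylBhattacharyya_le_of_fiber (hD0 : IsDist D0) (hD1 : IsDist D1)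
    (hf0 : ∀ y, D0 y ≠ 0 → f y = some false) (hf1 : ∀ y, D1 y ≠ 0 → f y = some true)
    (C : κ → Set (ι → α)) (j : κ) (c : Bool) :
    cylBhattacharyya D0 D1 C ≤ 3 / 2 * cylMass (fun y => (D0 y + D1 y) / 2) C
      - 5 / 6 * cylMass (fun y => (D0 y + D1 y) / 2)
          (Function.update C j (C j ∩ {y | f y = some c})) := by
  set a := prS D0 (C j)
  set b := prS D1 (C j)
  set R := ∏ j' ∈ {j}ᶜ, prS (fun y => (D0 y + D1 y) / 2) (C j')
  have ha : 0 ≤ a := prS_nonneg hD0.1 _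
  have hb : 0 ≤ b := prS_nonneg hD1.1 _
  have hR : 0 ≤ R := Finset.prod_nonneg fun j' _ =>
    prS_nonneg (fun y => div_nonneg (add_nonneg (hD0.1 y) (hD1.1 y)) zero_le_two) _
  have hrest : ∏ j' ∈ {j}ᶜ, √(prS D0 (C j') * prS D1 (C j')) ≤ R := by
    refine Finset.prod_le_prod (fun _ _ => Real.sqrt_nonneg _) fun j' _ => ?_
    rw [prS_add_div_two]
    linarith [Real.sqrt_mul_le_mul_add_div (prS_nonneg hD0.1 (C j')) (prS_nonneg hD1.1 (C j'))
      one_half_pos]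
  have hfiber : cylMass (fun y => (D0 y + D1 y) / 2)
      (Function.update C j (C j ∩ {y | f y = some c})) = (if c then b else a) / 2 * R := by
    rw [cylMass, Fintype.prod_eq_mul_prod_compl j, Function.update_self,
      prS_add_div_two_inter hf0 hf1]
    congr 1
    · cases c <;> rfl
    · exact Finset.prod_congr rfl fun j' hj' => by
        rw [Function.update_of_ne (by simpa using hj')]
  have hmass : cylMass (fun y => (D0 y + D1 y) / 2) C = (a + b) / 2 * R := by
    rw [cylMass, Fintype.prod_eq_mul_prod_compl j, prS_add_div_two]
  have hsqrt : √(a * b) ≤ 3 / 2 * ((a + b) / 2) - 5 / 6 * ((if c then b else a) / 2) := by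
    cases c
    · have amgm := Real.sqrt_mul_le_mul_add_div ha hb (by norm_num : (0 : ℝ) < 1 / 3)
      norm_num at amgm ⊢
      linarith
    · have amgm := Real.sqrt_mul_le_mul_add_div hb ha (by norm_num : (0 : ℝ) < 1 / 3)
      rw [mul_comm] at amgm
      norm_num at amgm ⊢
      linarith
  calc cylBhattacharyya D0 D1 C
      = √(a * b) * ∏ j' ∈ {j}ᶜ, √(prS D0 (C j') * prS D1 (C j')) :=
        Fintype.prod_eq_mul_prod_compl j _
    _ ≤ √(a * b) * R := mul_le_mul_of_nonneg_left hrest (Real.sqrt_nonneg _)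
    _ ≤ (3 / 2 * ((a + b) / 2) - 5 / 6 * ((if c then b else a) / 2)) * R :=
        mul_le_mul_of_nonneg_right hsqrt hR
    _ = _ := by rw [hfiber, hmass]; ring

theorem DTree.bhattacharyya_le_of_select [DecidableEq α] (hD0 : IsDist D0) (hD1 : IsDist D1)
    (hf0 : ∀ y, D0 y ≠ 0 → f y = some false) (hf1 : ∀ y, D1 y ≠ 0 → f y = some true)
    (T : DTree α (κ × ι) (κ × Bool))
    (hT : 2 / 3 ≤ ∑ x, cylWeight (fun y => (D0 y + D1 y) / 2) (fun _ => Set.univ) x *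
      if f (fun i => x ((T.eval x).1, i)) = some (T.eval x).2 then 1 else 0) :
    T.bhattacharyya D0 D1 (fun _ => Set.univ) ≤ 17 / 18 := by
  set D := fun y => (D0 y + D1 y) / 2
  have hsucc := sum_cylWeight_mul_eval D
    (fun b x => if f (fun i => x (b.1, i)) = some b.2 then 1 else 0) T fun _ => Set.univ
  have hleaf : (fun C (b : κ × Bool) =>
      ∑ x, cylWeight D C x * if f (fun i => x (b.1, i)) = some b.2 then 1 else 0)
      = fun C b => cylMass D (Function.update C b.1 (C b.1 ∩ {y | f y = some b.2})) := by
    funext C b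
    exact sum_cylWeight_mul_ite D C b.1 fun y => f y = some b.2
  rw [hleaf] at hsucc
  have hleaf_le : ∀ C (b : κ × Bool), cylBhattacharyya D0 D1 C ≤ 3 / 2 * cylMass D C
      - 5 / 6 * cylMass D (Function.update C b.1 (C b.1 ∩ {y | f y = some b.2})) :=
    fun C b => cylBhattacharyya_le_of_fiber hD0 hD1 hf0 hf1 C b.1 b.2
  calc T.bhattacharyya D0 D1 (fun _ => Set.univ)
      ≤ T.leafSum (fun C b => 3 / 2 * cylMass D C
          - 5 / 6 * cylMass D (Function.update C b.1 (C b.1 ∩ {y | f y = some b.2})))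
          (fun _ => Set.univ) :=
        leafSum_mono hleaf_le _ _
    _ = 3 / 2 - 5 / 6 * ∑ x, cylWeight D (fun _ => Set.univ) x *
          if f (fun i => x ((T.eval x).1, i)) = some (T.eval x).2 then 1 else 0 := by
        rw [leafSum_sub, leafSum_const_mul, leafSum_const_mul, leafSum_cylMass,
          cylMass_const_univ (sum_add_div_two_eq_one hD0.2 hD1.2), hsucc, mul_one]
    _ ≤ 17 / 18 := by linarith

end Selection

section Amplification

open DTree

variable {α ι κ κ' τ β : Type} [Fintype α]

def DTree.chain (T : DTree α (κ' × ι) β) (e : τ × κ' → κ) (l : List τ) : DTree α (κ × ι) Unit :=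
  l.foldr (fun t U => (T.reindex (Prod.map (fun j => e (t, j)) id)).graft U) (.leaf ())

theorem DTree.depth_chain (T : DTree α (κ' × ι) β) (e : τ × κ' → κ) (l : List τ) :
    (T.chain e l).depth ≤ l.length * T.depth := by
  induction l with
  | nil => simp [chain, depth]
  | cons t l ih =>
    calc (T.chain e (t :: l)).depth
        ≤ (T.reindex (Prod.map (fun j => e (t, j)) id)).depth + (T.chain e l).depth :=
          depth_graft _ _
      _ ≤ (l.length + 1) * T.depth := by rw [depth_reindex]; linarith
      _ = (t :: l).length * T.depth := by rw [List.length_cons]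

variable [Fintype ι] [DecidableEq ι] [Fintype κ] [DecidableEq κ] [Fintype κ'] [DecidableEq κ']
  {D0 D1 : (ι → α) → ℝ}

theorem DTree.bhattacharyya_chain_le (h0 : ∑ y, D0 y = 1) (h1 : ∑ y, D1 y = 1)
    (T : DTree α (κ' × ι) β) {e : τ × κ' → κ} (he : Function.Injective e) {γ : ℝ} (hγ0 : 0 ≤ γ)
    (hγ : T.bhattacharyya D0 D1 (fun _ => Set.univ) ≤ γ) {l : List τ} (hl : l.Nodup)
    {C : κ → Set (ι → α)} (hC : ∀ t ∈ l, ∀ j, C (e (t, j)) = Set.univ) :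
    (T.chain e l).bhattacharyya D0 D1 C ≤ γ ^ l.length * cylBhattacharyya D0 D1 C := by
  induction l generalizing C with
  | nil => simp [chain, DTree.bhattacharyya, leafSum]
  | cons t l ih =>
    obtain ⟨htl, hl⟩ := List.nodup_cons.mp hl
    set A := T.reindex (Prod.map (fun j => e (t, j)) id)
    have hfresh : ∀ (C' : κ → Set (ι → α)) (p : κ × ι) (a : α),
        p ∈ Set.range (Prod.map (fun j => e (t, j)) id) →
        (∀ t' ∈ l, ∀ j, C' (e (t', j)) = Set.univ) →
        ∀ t' ∈ l, ∀ j, restrictAt C' p a (e (t', j)) = Set.univ := by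
      rintro C' _ a ⟨⟨j₀, i⟩, rfl⟩ hC' t' ht' j
      rw [restrictAt, Function.update_of_ne, hC' t' ht' j]
      intro h
      have htt' : t' = t := congrArg Prod.fst (he h)
      exact htl (htt' ▸ ht')
    calc (T.chain e (t :: l)).bhattacharyya D0 D1 C
        = A.leafSum (fun C' _ => (T.chain e l).bhattacharyya D0 D1 C') C :=
          leafSum_graft _ _ _
      _ ≤ A.leafSum (fun C' _ => γ ^ l.length * cylBhattacharyya D0 D1 C') C :=
          leafSum_le_leafSum_of_invariant _ hfresh (fun C' _ hC' => ih hl hC')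
            (queriesIn_reindex _ T) fun t' ht' => hC t' (List.mem_cons_of_mem t ht')
      _ = γ ^ l.length * (T.bhattacharyya D0 D1 (fun _ => Set.univ)
            * cylBhattacharyya D0 D1 C) := by
          rw [leafSum_const_mul, ← DTree.bhattacharyya,
            bhattacharyya_reindex h0 h1 (e := fun j => e (t, j))
              (he.comp (Prod.mk_right_injective t)) T fun j => hC t List.mem_cons_self j]
      _ ≤ γ ^ (t :: l).length * cylBhattacharyya D0 D1 C := by
          rw [List.length_cons, pow_succ, mul_assoc]
          gcongr
          exact cylBhattacharyya_nonneg C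

end Amplification

section Majority

open DTree

variable {α ι κ β : Type} [Fintype α] [Fintype ι] [DecidableEq ι] [Fintype κ]
  [DecidableEq κ] {D0 D1 : (ι → α) → ℝ}

noncomputable def DTree.majority (D0 D1 : (ι → α) → ℝ) (T : DTree α (κ × ι) β)
    (C : κ → Set (ι → α)) : DTree α (κ × ι) Bool :=
  T.relabel (fun C' _ => decide (cylMass D0 C' ≤ cylMass D1 C')) C

theorem DTree.depth_majority (T : DTree α (κ × ι) β) (C : κ → Set (ι → α)) :
    (T.majority D0 D1 C).depth = T.depth :=
  depth_relabel _ T C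

theorem DTree.sub_bhattacharyya_le_majority [DecidableEq α] (hD0 : ∀ y, 0 ≤ D0 y)
    (hD1 : ∀ y, 0 ≤ D1 y) (T : DTree α (κ × ι) β) (C : κ → Set (ι → α)) :
    cylMass D0 C + cylMass D1 C - T.bhattacharyya D0 D1 C
      ≤ (∑ x, cylWeight D0 C x * if (T.majority D0 D1 C).eval x = false then 1 else 0)
        + ∑ x, cylWeight D1 C x * if (T.majority D0 D1 C).eval x = true then 1 else 0 := by
  rw [sum_cylWeight_mul_eval D0 (fun c _ => if c = false then 1 else 0),
    sum_cylWeight_mul_eval D1 (fun c _ => if c = true then 1 else 0), ← leafSum_add, majority,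
    leafSum_relabel, DTree.bhattacharyya, ← leafSum_cylMass D0 T C, ← leafSum_cylMass D1 T C,
    ← leafSum_add, ← leafSum_sub]
  refine leafSum_mono (fun C' _ => ?_) T C
  simp only [← Finset.sum_mul, sum_cylWeight, cylBhattacharyya_eq_sqrt hD0 hD1]
  have hmin := Real.min_le_sqrt_mul (cylMass_nonneg hD0 C') (cylMass_nonneg hD1 C')
  by_cases h : cylMass D0 C' ≤ cylMass D1 C'
  · rw [min_eq_left h] at hmin
    simp [h]
    linarith
  · rw [min_eq_right (le_of_not_ge h)] at hmin
    simp [h]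
    linarith

end Majority

theorem cylWeight_const_univ {α : Type} {n k : ℕ} (D : (Fin n → α) → ℝ) :
    cylWeight D (fun _ : Fin k => Set.univ) = prodD D := by
  funext x
  simp [cylWeight, prodD]

theorem sum_prodD {α : Type} [Fintype α] {n : ℕ} (k : ℕ) {D : (Fin n → α) → ℝ}
    (hD : ∑ y, D y = 1) : ∑ x : Fin k × Fin n → α, prodD D x = 1 := by
  rw [← cylWeight_const_univ, sum_cylWeight, cylMass_const_univ hD]

section Assembly

open DTree

variable {n : ℕ} {f : (Fin n → Bool) → Option Bool} {D0 D1 : (Fin n → Bool) → ℝ}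

theorem exists_select_depth_le_selC (hBD : BalancedDist f D0 D1) :
    ∃ k, 0 < k ∧ ∃ T : DTree Bool (Fin k × Fin n) (Fin k × Bool),
      T.depth ≤ selC (1 / 3) f (fun x => (D0 x + D1 x) / 2) ∧
      1 - 1 / 3 ≤ prS (prodD fun x => (D0 x + D1 x) / 2)
        {x | f (fun i => x ((T.eval x).1, i)) = some (T.eval x).2} := by
  obtain ⟨hD0, hD1, hf0, hf1⟩ := hBD
  set D := fun x => (D0 x + D1 x) / 2
  obtain ⟨T, hTdepth, hTeval⟩ := exists_depth_le_card_eval_eq (α := Bool) (ι := Fin 1 × Fin n)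
    fun x => ((0 : Fin 1), (f fun i => x (0, i)).getD false)
  refine Nat.sInf_mem (s := {q | ∃ k, 0 < k ∧ ∃ T : DTree Bool (Fin k × Fin n) (Fin k × Bool),
    T.depth ≤ q ∧ 1 - 1 / 3 ≤ prS (prodD D)
      {x | f (fun i => x ((T.eval x).1, i)) = some (T.eval x).2}})
    ⟨n, 1, one_pos, T, by simpa using hTdepth, ?_⟩
  have hsupp (x : Fin 1 × Fin n → Bool) (hx : prodD D x ≠ 0) :
      f (fun i => x ((T.eval x).1, i)) = some (T.eval x).2 := by
    have hx : D0 (fun i => x (0, i)) ≠ 0 ∨ D1 (fun i => x (0, i)) ≠ 0 := by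
      by_contra! h
      simp [prodD, D, h] at hx
    rw [hTeval]
    rcases hx with hx | hx
    · simp [hf0 _ hx]
    · simp [hf1 _ hx]
  have hind (x : Fin 1 × Fin n → Bool) :
      {x | f (fun i => x ((T.eval x).1, i)) = some (T.eval x).2}.indicator (prodD D) x
        = prodD D x := by
    by_cases hx : prodD D x = 0
    · simp [hx]
    · rw [Set.indicator_of_mem]
      exact hsupp x hx
  rw [prS, Finset.sum_congr rfl fun x _ => hind x,
    sum_prodD 1 (sum_add_div_two_eq_one hD0.2 hD1.2)]
  norm_num

theorem corrC_le_mul_selC (hBD : BalancedDist f D0 D1) :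
    corrC (1 / 3) D0 D1 ≤ 8 * selC (1 / 3) f (fun x => (D0 x + D1 x) / 2) := by
  obtain ⟨k, hk, T, hTdepth, hTsucc⟩ := exists_select_depth_le_selC hBD
  obtain ⟨hD0, hD1, hf0, hf1⟩ := hBD
  have hT : T.bhattacharyya D0 D1 (fun _ => Set.univ) ≤ 17 / 18 := by
    refine T.bhattacharyya_le_of_select hD0 hD1 hf0 hf1 ?_
    rw [cylWeight_const_univ, ← prS_setOf_eq_sum]
    linarith
  set U := T.chain finProdFinEquiv (List.finRange 8)
  have hU : U.bhattacharyya D0 D1 (fun _ => Set.univ) ≤ (17 / 18) ^ 8 := by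
    simpa [cylBhattacharyya_const_univ hD0.2 hD1.2] using
      T.bhattacharyya_chain_le hD0.2 hD1.2 finProdFinEquiv.injective (by norm_num) hT
        (List.nodup_finRange 8) (C := fun _ => Set.univ) fun _ _ _ => rfl
  have hsucc := U.sub_bhattacharyya_le_majority hD0.1 hD1.1 fun _ => Set.univ
  rw [cylMass_const_univ hD0.2, cylMass_const_univ hD1.2, cylWeight_const_univ,
    cylWeight_const_univ, ← prS_setOf_eq_sum, ← prS_setOf_eq_sum] at hsucc
  refine Nat.sInf_le ⟨8 * k, by positivity, U.majority D0 D1 fun _ => Set.univ, ?_, ?_⟩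
  · rw [depth_majority]
    calc U.depth ≤ 8 * T.depth := by simpa using T.depth_chain finProdFinEquiv (List.finRange 8)
      _ ≤ _ := Nat.mul_le_mul_left 8 hTdepth
  · norm_num at hU ⊢
    linarith

end Assembly

/-- `corr_{1/3}(f,D) ≤ C · sel_{1/3}(f,D)` for every partial boolean `f`
and balanced input distribution `D = ½D0 + ½D1` for `f`. -/
theorem corr_le_sel :
    ∃ C : ℝ, 0 < C ∧
      ∀ (n : ℕ) (f : (Fin n → Bool) → Option Bool) (D0 D1 : (Fin n → Bool) → ℝ),
        BalancedDist f D0 D1 →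
          (corrC (1/3) D0 D1 : ℝ) ≤ C * (selC (1/3) f (fun x => (D0 x + D1 x) / 2) : ℝ) :=
  ⟨8, by norm_num, fun _ _ _ _ hBD => by exact_mod_cast corrC_le_mul_selC hBD⟩
end

section
/- Let Σ be a finite alphabet, D0 and D1 probability distributions on Σ^n, and T a deterministic decision tree on Σ^n with boolean output (accept/reject). Suppose T accepts x ∼ D0 with probability at most δ0 and accepts x ∼ D1 with probability at least 1−δ1. Then for every M > 0, T is a (M·δ0 + δ1, M)-likelihood booster for D0, D1; that is, the probability that x ∼ D1 reaches a leaf ℓ with D1(Input(ℓ)) < M · D0(Input(ℓ)) is at most M·δ0 + δ1. -/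
open Finset

/-!
The leaves partition the inputs. The accepting leaves with `D1(ℓ) < M·D0(ℓ)` have total
`D1`-mass at most `M` times their total `D0`-mass, hence at most `M·D0(accept) ≤ M·δ0`;
all other bad inputs are rejected, which has `D1`-probability at most `δ1`.
-/

namespace DTree

variable {α ι β : Type}

lemma mem_reach_self (T : DTree α ι β) (x : ι → α) : x ∈ T.reach x := by
  induction T with
  | leaf => trivial
  | node i ch ih => exact ⟨rfl, ih _⟩

lemma reach_eq_of_mem {T : DTree α ι β} {x y : ι → α} (h : y ∈ T.reach x) :
    T.reach y = T.reach x := by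
  induction T with
  | leaf => rfl
  | node i ch ih =>
    obtain ⟨hi, hy⟩ := h
    change {z | z i = y i} ∩ (ch (y i)).reach y = _
    rw [show y i = x i from hi, ih (x i) hy]
    rfl

lemma eval_eq_of_mem {T : DTree α ι β} {x y : ι → α} (h : y ∈ T.reach x) :
    T.eval y = T.eval x := by
  induction T with
  | leaf => rfl
  | node i ch ih =>
    obtain ⟨hi, hy⟩ := h
    change (ch (y i)).eval y = _
    rw [show y i = x i from hi]
    exact ih (x i) hy

end DTree

section prS

variable {γ : Type} [Fintype γ]

lemma prS_add_prS_compl (D : γ → ℝ) (S : Set γ) : prS D S + prS D Sᶜ = ∑ x, D x := by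
  simp only [prS, ← Finset.sum_add_distrib, Set.indicator_self_add_compl_apply]

lemma prS_inter_add_prS_diff (D : γ → ℝ) (S A : Set γ) :
    prS D (S ∩ A) + prS D (S \ A) = prS D S := by
  simp only [prS, ← Finset.sum_add_distrib, ← Set.indicator_union_of_disjoint
    (Set.disjoint_sdiff_inter.symm) D, Set.inter_union_sdiff]

lemma prS_mono {D : γ → ℝ} (hD : ∀ x, 0 ≤ D x) {S S' : Set γ} (h : S ⊆ S') :
    prS D S ≤ prS D S' :=
  Finset.sum_le_sum fun x _ => Set.indicator_le_indicator_of_subset h (fun y => hD y) x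

lemma prS_le_mul_of_forall_block (P : γ → Set γ) (hself : ∀ x, x ∈ P x)
    (hblock : ∀ {x y}, y ∈ P x → P y = P x) {D0 D1 : γ → ℝ} {c : ℝ} {S : Set γ}
    (hS : ∀ x ∈ S, P x ⊆ S) (hc : ∀ x ∈ S, prS D1 (P x) ≤ c * prS D0 (P x)) :
    prS D1 S ≤ c * prS D0 S := by
  classical
  set Sf := Finset.univ.filter (· ∈ S)
  have hfiber : ∀ x ∈ S, Sf.filter (fun y => P y = P x) = Finset.univ.filter (· ∈ P x) := by
    intro x hx
    ext y
    simp only [Sf, Finset.mem_filter, Finset.mem_univ, true_and]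
    exact ⟨fun ⟨_, hy⟩ => hy ▸ hself y, fun hy => ⟨hS x hx hy, hblock hy⟩⟩
  have hsum : ∀ D : γ → ℝ, prS D S = ∑ s ∈ Sf.image P, prS D s := by
    intro D
    rw [Finset.sum_image' D fun x hx => ?_, prS, Finset.sum_indicator_eq_sum_filter]
    rw [hfiber x (Finset.mem_filter.mp hx).2, prS, Finset.sum_indicator_eq_sum_filter]
  rw [hsum, hsum, Finset.mul_sum]
  refine Finset.sum_le_sum fun s hs => ?_
  obtain ⟨x, hx, rfl⟩ := Finset.mem_image.mp hs
  exact hc x (Finset.mem_filter.mp hx).2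

end prS

/-- If `T` accepts `x ∼ D0` with probability at most `δ0` and accepts
`x ∼ D1` with probability at least `1 − δ1`, then for every `M > 0` the probability that
`x ∼ D1` reaches a leaf `ℓ` with `D1(Input(ℓ)) < M·D0(Input(ℓ))` is at most `M·δ0 + δ1`. -/
theorem query_to_booster {α : Type} [Fintype α] {n : ℕ}
    (D0 D1 : (Fin n → α) → ℝ) (hD0 : IsDist D0) (hD1 : IsDist D1)
    (T : DTree α (Fin n) Bool) (δ0 δ1 : ℝ)
    (h0 : prS D0 {x | T.eval x = true} ≤ δ0)
    (h1 : 1 - δ1 ≤ prS D1 {x | T.eval x = true}) :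
    ∀ M : ℝ, 0 < M →
      prS D1 {x | prS D1 (T.reach x) < M * prS D0 (T.reach x)} ≤ M * δ0 + δ1 := by
  intro M hM
  set Bad := {x | prS D1 (T.reach x) < M * prS D0 (T.reach x)}
  set Acc := {x | T.eval x = true}
  have hBadAcc : prS D1 (Bad ∩ Acc) ≤ M * prS D0 (Bad ∩ Acc) := by
    refine prS_le_mul_of_forall_block T.reach T.mem_reach_self DTree.reach_eq_of_mem
      (fun x hx y hy => ?_) fun x hx => hx.1.le
    simpa only [Bad, Acc, Set.mem_inter_iff, Set.mem_ofPred_eq, DTree.reach_eq_of_mem hy,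
      DTree.eval_eq_of_mem hy] using hx
  have hBadRej : prS D1 (Bad \ Acc) ≤ δ1 := by
    have := prS_add_prS_compl D1 Acc
    have := prS_mono hD1.1 (Set.sdiff_subset_compl Bad Acc)
    linarith [hD1.2]
  have hAcc : prS D0 (Bad ∩ Acc) ≤ δ0 := (prS_mono hD0.1 Set.inter_subset_right).trans h0
  calc prS D1 Bad = prS D1 (Bad ∩ Acc) + prS D1 (Bad \ Acc) :=
        (prS_inter_add_prS_diff D1 _ _).symm
    _ ≤ M * δ0 + δ1 := by gcongr; exact hBadAcc.trans (by gcongr)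
end
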